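/- For every α ≥ 2, the integral over ℝ² of 2α²(|y|^{α−2}/(1 + |y|^α)²)·((1 − |y|^α)/(1 + |y|^α))·log|y| equals −4π. -/

import Mathlib

open MeasureTheory Real Finset

noncomputable def laplacian (f : EuclideanSpace ℝ (Fin 2) → ℝ) (x : EuclideanSpace ℝ (Fin 2)) : ℝ :=
  ∑ i : Fin 2, fderiv ℝ (fun y => fderiv ℝ f y (EuclideanSpace.single i 1)) x (EuclideanSpace.single i 1)

/-!
In polar coordinates the integral is `2π ∫₀^∞ r K(r) dr` with `K = singularKernel α`, and the
substitution `u = r ^ α` turns `r K(r) dr` into `2 (1 - u) log u / (1 + u)³ du`, which no longer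
depends on `α`. This integrand is nonpositive and is the derivative of
`H u = 2 / (1 + u) + 2 u log u / (1 + u)²`, so its integral over `(0, ∞)` is `H ∞ - H 0 = 0 - 2`
(`H` is continuous at `0` because `u log u → 0`).
-/

open Set Filter Topology

lemma integral_fun_norm_euclideanSpace_two {F : Type*} [NormedAddCommGroup F] [NormedSpace ℝ F]
    (f : ℝ → F) :
    ∫ y : EuclideanSpace ℝ (Fin 2), f ‖y‖ = (2 * π) • ∫ r in Ioi 0, r • f r := by
  rw [integral_fun_norm_addHaar, finrank_euclideanSpace_fin, measureReal_def,
    EuclideanSpace.volume_ball_fin_two]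
  simp [pi_nonneg, mul_smul, ofNat_smul_eq_nsmul]

noncomputable def logKernel (u : ℝ) : ℝ :=
  2 * (1 - u) * log u / (1 + u) ^ 3

lemma logKernel_nonpos {u : ℝ} (hu : 0 ≤ u) : logKernel u ≤ 0 := by
  have h_num : (1 - u) * log u ≤ 0 := by
    rcases le_total u 1 with h | h
    · exact mul_nonpos_of_nonneg_of_nonpos (by linarith) (log_nonpos hu h)
    · exact mul_nonpos_of_nonpos_of_nonneg (by linarith) (log_nonneg h)
  rw [logKernel, mul_assoc]
  exact div_nonpos_of_nonpos_of_nonneg (by linarith) (by positivity)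

noncomputable def primitiveLogKernel (u : ℝ) : ℝ :=
  2 / (1 + u) + 2 * (u * log u) / (1 + u) ^ 2

lemma hasDerivAt_primitiveLogKernel {u : ℝ} (hu : u ≠ 0) (hu' : 1 + u ≠ 0) :
    HasDerivAt primitiveLogKernel (logKernel u) u := by
  have hden : HasDerivAt (fun x : ℝ => 1 + x) 1 u := (hasDerivAt_id u).const_add 1
  have h := ((hasDerivAt_const u (2 : ℝ)).div hden hu').add
    (((hasDerivAt_mul_log hu).const_mul 2).div (hden.pow 2) (pow_ne_zero 2 hu'))
  refine h.congr_deriv ?_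
  simp only [logKernel, Pi.pow_apply]
  field_simp
  ring

lemma continuousAt_primitiveLogKernel_zero : ContinuousAt primitiveLogKernel 0 := by
  have := continuous_mul_log.continuousAt (x := (0 : ℝ))
  unfold primitiveLogKernel
  fun_prop (disch := norm_num)

lemma tendsto_primitiveLogKernel_atTop : Tendsto primitiveLogKernel atTop (𝓝 0) := by
  have h_inv : Tendsto (fun u : ℝ => 2 / (1 + u)) atTop (𝓝 0) :=
    tendsto_const_nhds.div_atTop (tendsto_atTop_add_const_left _ 1 tendsto_id)
  have h_log : Tendsto (fun u : ℝ => 2 * (u * log u) / (1 + u) ^ 2) atTop (𝓝 0) := by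
    have h_dom : Tendsto (fun u : ℝ => 2 * (log u / u)) atTop (𝓝 0) := by
      simpa using (tendsto_pow_log_div_mul_add_atTop 1 0 1 one_ne_zero).const_mul 2
    refine tendsto_of_tendsto_of_tendsto_of_le_of_le' tendsto_const_nhds h_dom ?_ ?_
    · filter_upwards [eventually_ge_atTop 1] with u hu
      have := log_nonneg hu
      positivity
    · -- `u ^ 2 ≤ (1 + u) ^ 2`
      filter_upwards [eventually_ge_atTop 1] with u hu
      have := log_nonneg hu
      rw [div_le_iff₀ (by positivity)]
      field_simp
      nlinarith [mul_nonneg this (by linarith : (0 : ℝ) ≤ u)]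
  rw [← add_zero (0 : ℝ)]
  exact h_inv.add h_log

lemma integral_Ioi_logKernel : ∫ u in Ioi 0, logKernel u = -2 := by
  rw [integral_Ioi_of_hasDerivAt_of_nonpos continuousAt_primitiveLogKernel_zero.continuousWithinAt
    (fun u hu => hasDerivAt_primitiveLogKernel hu.out.ne' (by linarith [hu.out]))
    (fun u hu => logKernel_nonpos (le_of_lt hu)) tendsto_primitiveLogKernel_atTop]
  simp [primitiveLogKernel]

noncomputable def singularKernel (α r : ℝ) : ℝ :=
  2 * α ^ 2 * (r ^ (α - 2) / (1 + r ^ α) ^ 2) * ((1 - r ^ α) / (1 + r ^ α)) * log r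

lemma mul_singularKernel {α r : ℝ} (hα : 0 < α) (hr : 0 < r) :
    r * singularKernel α r = (|α| * r ^ (α - 1)) * logKernel (r ^ α) := by
  have : 0 < 1 + r ^ α := by positivity
  rw [singularKernel, logKernel, abs_of_pos hα, log_rpow hr, rpow_sub hr, rpow_sub hr, rpow_one,
    rpow_two]
  field_simp

theorem singular_kernel_lognorm_integral (α : ℝ) (hα : 2 ≤ α) :
    ∫ y : EuclideanSpace ℝ (Fin 2),
      2 * α ^ 2 * (‖y‖ ^ (α - 2) / (1 + ‖y‖ ^ α) ^ 2) * ((1 - ‖y‖ ^ α) / (1 + ‖y‖ ^ α)) *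
        Real.log ‖y‖ = -(4 * Real.pi) := by
  have hα0 : 0 < α := by linarith
  calc _ = (2 * π) • ∫ r in Ioi 0, r • singularKernel α r :=
        integral_fun_norm_euclideanSpace_two (singularKernel α)
    _ = (2 * π) • ∫ r in Ioi 0, (|α| * r ^ (α - 1)) • logKernel (r ^ α) := by
        congr 1
        exact setIntegral_congr_fun measurableSet_Ioi fun r hr => mul_singularKernel hα0 hr
    _ = -(4 * π) := by
        rw [integral_comp_rpow_Ioi logKernel hα0.ne', integral_Ioi_logKernel, smul_eq_mul]
        ring
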